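/- arXiv:1808.01888 — 2 statements merged into one kernel-verified Lean document; each statement's English description precedes it below -/
import Mathlib

section
/- Let U, V be real inner product spaces (V a Hilbert space), B : U × V → ℝ a bounded bilinear form, and suppose for each trial basis function e ∈ U the 'optimal test function' v_e ∈ V is defined by the Riesz representation problem (r, v_e)_V = B(e, r) for all r ∈ V. Then for any u, u' ∈ U, B(u, v_{u'}) = (v_{u'}, v_u)_V = B(u', v_u); in particular the stiffness matrix G_{ij} = B(e_i, v_{e_j}) arising from optimal test functions is symmetric and positive semidefinite, and it is positive definite if u ↦ v_u is injective. -/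
/-!
Since `⟪T u, r⟫ = B u r` for every test function `r`, testing with `r = T u'` gives
`B u (T u') = ⟪T u, T u'⟫`: the stiffness matrix is the Gram matrix of the optimal test functions
`T (e i)`. It is therefore symmetric and positive semidefinite, and positive definite as soon as
the `T (e i)` are linearly independent, which holds when `T` (linear by uniqueness of the Riesz
representative) is injective.
-/

open RealInnerProductSpace Matrix

section RieszRepresentative

variable {U V : Type*} [AddCommGroup U] [Module ℝ U] [NormedAddCommGroup V]
  [InnerProductSpace ℝ V] {B : U →ₗ[ℝ] V →L[ℝ] ℝ} {T : U → V}

def rieszLinearMap (hT : ∀ u : U, ∀ r : V, ⟪T u, r⟫ = B u r) : U →ₗ[ℝ] V where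
  toFun := T
  map_add' u u' := ext_inner_right ℝ fun r => by simp only [inner_add_left, hT, map_add,
    _root_.add_apply]
  map_smul' c u := ext_inner_right ℝ fun r => by simp only [real_inner_smul_left, hT,
    map_smul, _root_.smul_apply, smul_eq_mul, RingHom.id_apply]

theorem apply_riesz_eq_inner (hT : ∀ u : U, ∀ r : V, ⟪T u, r⟫ = B u r) (u u' : U) :
    B u (T u') = ⟪T u', T u⟫ := by
  rw [← hT, real_inner_comm]

theorem apply_riesz_comm (hT : ∀ u : U, ∀ r : V, ⟪T u, r⟫ = B u r) (u u' : U) :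
    B u (T u') = B u' (T u) := by
  rw [apply_riesz_eq_inner hT, real_inner_comm, apply_riesz_eq_inner hT]

theorem gram_riesz_comp {ι : Type*} (hT : ∀ u : U, ∀ r : V, ⟪T u, r⟫ = B u r) (e : ι → U) :
    gram ℝ (T ∘ e) = of fun i j => B (e i) (T (e j)) :=
  Matrix.ext fun i j => by
    rw [gram_apply, of_apply, apply_riesz_eq_inner hT, real_inner_comm, Function.comp_apply,
      Function.comp_apply]

theorem LinearIndependent.riesz_comp {ι : Type*} (hT : ∀ u : U, ∀ r : V, ⟪T u, r⟫ = B u r)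
    (hinj : Function.Injective T) {e : ι → U} (he : LinearIndependent ℝ e) :
    LinearIndependent ℝ (T ∘ e) :=
  he.map' (rieszLinearMap hT) (LinearMap.ker_eq_bot.mpr hinj)

end RieszRepresentative

theorem stmt5_general {U V : Type*} [AddCommGroup U] [Module ℝ U]
    [NormedAddCommGroup V] [InnerProductSpace ℝ V]
    (B : U →ₗ[ℝ] V →L[ℝ] ℝ) (T : U → V)
    (hT : ∀ u : U, ∀ r : V, ⟪T u, r⟫ = B u r)
    {N : ℕ} (e : Fin N → U) (he : LinearIndependent ℝ e)
    (G : Matrix (Fin N) (Fin N) ℝ) (hG : ∀ i j, G i j = B (e i) (T (e j))) :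
    (∀ u u' : U, B u (T u') = ⟪T u', T u⟫ ∧ B u (T u') = B u' (T u)) ∧
    G.IsSymm ∧ G.PosSemidef ∧ (Function.Injective T → G.PosDef) := by
  have hG_gram : G = gram ℝ (T ∘ e) := by
    rw [gram_riesz_comp hT]
    exact Matrix.ext hG
  subst hG_gram
  exact ⟨fun u u' => ⟨apply_riesz_eq_inner hT u u', apply_riesz_comm hT u u'⟩,
    isHermitian_iff_isSymm.mp (isHermitian_gram ℝ _), posSemidef_gram ℝ _,
    fun hinj => posDef_gram_of_linearIndependent (he.riesz_comp hT hinj)⟩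

/-- optimal test functions yield a symmetric positive (semi)definite
stiffness matrix `G i j = B (e i) (T (e j))`, where `T u = v_u` is the Riesz
representative of `B u ·`. -/
theorem stmt5 {U V : Type*} [AddCommGroup U] [Module ℝ U]
    [NormedAddCommGroup V] [InnerProductSpace ℝ V] [CompleteSpace V]
    (B : U →ₗ[ℝ] V →L[ℝ] ℝ) (T : U → V)
    (hT : ∀ u : U, ∀ r : V, ⟪T u, r⟫ = B u r)
    {N : ℕ} (e : Fin N → U) (he : LinearIndependent ℝ e)
    (G : Matrix (Fin N) (Fin N) ℝ) (hG : ∀ i j, G i j = B (e i) (T (e j))) :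
    (∀ u u' : U, B u (T u') = ⟪T u', T u⟫ ∧ B u (T u') = B u' (T u)) ∧
    G.IsSymm ∧ G.PosSemidef ∧ (Function.Injective T → G.PosDef) :=
  stmt5_general B T hT e he G hG
end

section
/- Let V be a real Hilbert space, U a vector space, B : U × V → ℝ bilinear with each B(u,·) bounded on V, and let ‖u‖_B := sup_{v ≠ 0} |B(u,v)|/‖v‖_V denote the energy seminorm. Suppose u ∈ U solves B(u,v) = F(v) for all v ∈ V, and U_h ⊆ U is a finite-dimensional subspace with Petrov–Galerkin solution u_h ∈ U_h satisfying B(u_h, v_w) = F(v_w) for all optimal test functions v_w, w ∈ U_h (where v_w is the Riesz representative of B(w,·)). Then u_h is the best approximation of u from U_h in the energy seminorm: ‖u − u_h‖_B ≤ ‖u − w‖_B for all w ∈ U_h. -/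
open RealInnerProductSpace

/-- the Petrov–Galerkin solution with optimal test functions is the
best approximation of the exact solution in the energy seminorm
`‖u‖_B = sup_{v ≠ 0} |B(u,v)|/‖v‖`. -/
theorem stmt7 {U V : Type*} [AddCommGroup U] [Module ℝ U]
    [NormedAddCommGroup V] [InnerProductSpace ℝ V] [CompleteSpace V]
    (B : U →ₗ[ℝ] V →L[ℝ] ℝ) (vRep : U → V)
    (hRep : ∀ u : U, ∀ r : V, ⟪vRep u, r⟫ = B u r)
    (F : V →L[ℝ] ℝ)
    (Uh : Submodule ℝ U) (hUh : FiniteDimensional ℝ Uh)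
    (u : U) (hu : ∀ v : V, B u v = F v)
    (uh : U) (huh : uh ∈ Uh)
    (hdisc : ∀ w ∈ Uh, B uh (vRep w) = F (vRep w))
    (enorm : U → ℝ)
    (henorm : ∀ z : U, enorm z = ⨆ v : {v : V // v ≠ 0}, |B z (v : V)| / ‖(v : V)‖) :
    ∀ w ∈ Uh, enorm (u - uh) ≤ enorm (u - w) := by
  -- the energy seminorm equals the norm of the Riesz representative
  have key : ∀ z : U, enorm z = ‖vRep z‖ := by
    intro z
    rw [henorm]
    have hbound : ∀ v : {v : V // v ≠ 0}, |B z (v : V)| / ‖(v : V)‖ ≤ ‖vRep z‖ := by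
      intro v
      rw [← hRep]
      rw [div_le_iff₀ (norm_pos_iff.mpr v.2)]
      exact abs_real_inner_le_norm _ _
    by_cases hne : Nonempty {v : V // v ≠ 0}
    · have hbdd : BddAbove (Set.range fun v : {v : V // v ≠ 0} => |B z (v : V)| / ‖(v : V)‖) :=
        ⟨‖vRep z‖, by rintro _ ⟨v, rfl⟩; exact hbound v⟩
      apply le_antisymm (ciSup_le hbound)
      by_cases hz : vRep z = 0
      · rw [hz, norm_zero]
        obtain ⟨v⟩ := hne
        exact le_ciSup_of_le hbdd v (div_nonneg (abs_nonneg _) (norm_nonneg _))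
      · apply le_ciSup_of_le hbdd ⟨vRep z, hz⟩
        rw [← hRep, real_inner_self_eq_norm_mul_norm, abs_of_nonneg
          (mul_nonneg (norm_nonneg _) (norm_nonneg _)),
          mul_div_assoc, div_self (norm_ne_zero_iff.mpr hz), mul_one]
    · have hV : vRep z = 0 := by
        by_contra h
        exact hne ⟨⟨vRep z, h⟩⟩
      have : IsEmpty {v : V // v ≠ 0} := not_nonempty_iff.mp hne
      rw [hV, norm_zero, iSup_of_empty', Real.sSup_empty]
  -- vRep is compatible with subtraction
  have hsub : ∀ a b : U, vRep (a - b) = vRep a - vRep b := by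
    intro a b
    apply ext_inner_right ℝ
    intro r
    rw [inner_sub_left, hRep, hRep, hRep, map_sub]
    simp
  -- Galerkin orthogonality
  have horth : ∀ x ∈ Uh, ⟪vRep (u - uh), vRep x⟫ = 0 := by
    intro x hx
    rw [hRep, map_sub]
    simp only [ContinuousLinearMap.sub_apply]
    rw [hu, hdisc x hx, sub_self]
  intro w hw
  rw [key, key]
  have hdecomp : vRep (u - w) = vRep (u - uh) + vRep (uh - w) := by
    rw [hsub, hsub, hsub]; abel
  have horth2 : ⟪vRep (u - uh), vRep (uh - w)⟫ = 0 :=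
    horth _ (Uh.sub_mem huh hw)
  have hpyth : ‖vRep (u - w)‖ ^ 2 = ‖vRep (u - uh)‖ ^ 2 + ‖vRep (uh - w)‖ ^ 2 := by
    rw [hdecomp, norm_add_sq_real, horth2]
    ring
  have h1 : ‖vRep (u - uh)‖ ^ 2 ≤ ‖vRep (u - w)‖ ^ 2 := by
    rw [hpyth]; linarith [sq_nonneg ‖vRep (uh - w)‖]
  nlinarith [norm_nonneg (vRep (u - uh)), norm_nonneg (vRep (u - w))]
end
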